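/- arXiv:2110.14992 — 5 statements merged into one kernel-verified Lean document; each statement's English description precedes it below -/
import Mathlib

section
/- For the Markov chain on N_0 A with transition probability P(b−a_j | b) = y_j Z_A(b−a_j;y) / (deg(b) Z_A(b;y)), the probability of any sample path (j_1,...,j_n) from b down to 0 (with n = deg(b)) equals y^u / (n! Z_A(b;y)), where u_j counts occurrences of j in the path; consequently the vector of counts u follows the A-hypergeometric distribution p(u;y) = y^u/(u! Z_A(b;y)). -/
/-- The `A`-hypergeometric polynomial `Z_A(b;y) = ∑_{u : Au = b, u ∈ ℕ₀^m} y^u / u!`. -/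
noncomputable def Zpoly (d m : ℕ) (A : Matrix (Fin d) (Fin m) ℤ) (b : Fin d → ℤ)
    (y : Fin m → ℝ) : ℝ :=
  ∑ᶠ u ∈ {u : Fin m → ℕ | A.mulVec (fun j => (u j : ℤ)) = b},
    (∏ j, y j ^ u j) / ∏ j, (Nat.factorial (u j) : ℝ)

lemma fact_prod_aux (n : ℕ) : ∏ t ∈ Finset.range n, ((t : ℝ) + 1) = n.factorial := by
  induction n with
  | zero => simp
  | succ k ih =>
      rw [Finset.prod_range_succ, ih, Nat.factorial_succ]
      push_cast; ring

/-- For the Markov chain with transition probabilities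
`P(b−a_j | b) = y_j Z_A(b−a_j;y)/(deg(b) Z_A(b;y))`, the probability of any sample path
`(j₁,…,j_n)` from `b` down to `0` (with `n = deg(b)`) equals `y^u/(n! Z_A(b;y))`,
where `u_j` counts the occurrences of `j` in the path; consequently the vector of
counts `u` follows the `A`-hypergeometric distribution `p(u;y) = y^u/(u! Z_A(b;y))`. -/
theorem stmt4 (d m : ℕ) (A : Matrix (Fin d) (Fin m) ℤ)
    (hA : ∃ c : Fin d → ℚ, ∀ j, ∑ i, c i * (A i j : ℚ) = 1)
    (b : Fin d → ℤ) (y : Fin m → ℝ) (hy : ∀ j, 0 < y j)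
    (n : ℕ) (path : Fin n → Fin m)
    -- the partial states of the chain along the path
    (bp : ℕ → Fin d → ℤ)
    (hbp : ∀ t i, bp t i
      = b i - ∑ s ∈ Finset.univ.filter (fun s : Fin n => (s : ℕ) < t), A i (path s))
    -- the path goes down to `0`
    (hend : bp n = 0)
    -- each state visited lies in `ℕ₀ A`, with the expected degrees
    (hdeg : ∀ t : ℕ, t ≤ n → ∀ u : Fin m → ℕ,
      A.mulVec (fun j => (u j : ℤ)) = bp t → ∑ j, u j = n - t)
    (hZ : ∀ t : ℕ, t ≤ n → Zpoly d m A (bp t) y ≠ 0)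
    -- `u` is the vector of counts of the path
    (u : Fin m → ℕ)
    (hu : ∀ j, u j = (Finset.univ.filter (fun t : Fin n => path t = j)).card) :
    (∏ t : Fin n,
        y (path t) * Zpoly d m A (bp ((t : ℕ) + 1)) y
          / (((n : ℝ) - (t : ℕ)) * Zpoly d m A (bp (t : ℕ)) y))
      = (∏ j, y j ^ u j) / ((n.factorial : ℝ) * Zpoly d m A b y)
    ∧ ((n.factorial : ℝ) / (∏ j, (Nat.factorial (u j) : ℝ)))
        * (∏ t : Fin n,
            y (path t) * Zpoly d m A (bp ((t : ℕ) + 1)) y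
              / (((n : ℝ) - (t : ℕ)) * Zpoly d m A (bp (t : ℕ)) y))
      = (∏ j, y j ^ u j) / ((∏ j, (Nat.factorial (u j) : ℝ)) * Zpoly d m A b y)
    := by
  set f : ℕ → ℝ := fun t => Zpoly d m A (bp t) y with hf
  -- bp 0 = b
  have hb0 : bp 0 = b := by
    funext i; rw [hbp]; simp
  have hZb : Zpoly d m A b y ≠ 0 := hb0 ▸ hZ 0 (Nat.zero_le _)
  -- Z at the end equals 1
  have hZn : f n = 1 := by
    have hset : {u : Fin m → ℕ | A.mulVec (fun j => (u j : ℤ)) = bp n}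
        = {fun _ => 0} := by
      ext v
      constructor
      · intro hv
        have hsum := hdeg n le_rfl v hv
        simp only [Nat.sub_self] at hsum
        funext j
        exact Finset.sum_eq_zero_iff.mp hsum j (Finset.mem_univ j)
      · intro hv
        simp only [Set.mem_singleton_iff] at hv
        subst hv
        show (A.mulVec fun j => ((0 : ℕ) : ℤ)) = bp n
        rw [hend]
        funext i
        simp [Matrix.mulVec, dotProduct]
    simp only [hf, Zpoly, hset, finsum_mem_singleton]
    simp
  -- telescoping
  have htel : (∏ t ∈ Finset.range n, f (t + 1)) * f 0 = ∏ t ∈ Finset.range n, f t := by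
    rw [← Finset.prod_range_succ' f n, Finset.prod_range_succ, hZn, mul_one]
  -- counts
  have hY : ∏ t : Fin n, y (path t) = ∏ j, y j ^ u j := by
    rw [← Finset.prod_fiberwise Finset.univ path (fun t => y (path t))]
    refine Finset.prod_congr rfl (fun j _ => ?_)
    rw [hu j, ← Finset.prod_const]
    exact Finset.prod_congr rfl (fun t ht => by
      rw [(Finset.mem_filter.mp ht).2])
  -- factorial
  have hfact : ∏ t ∈ Finset.range n, ((n : ℝ) - t) = n.factorial := by
    rw [← Finset.prod_range_reflect (fun t => ((n : ℝ) - t)) n, ← fact_prod_aux n]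
    refine Finset.prod_congr rfl (fun t ht => ?_)
    have htn : t < n := Finset.mem_range.mp ht
    have : (n - 1 - t : ℕ) = n - 1 - t := rfl
    have h1 : ((n - 1 - t : ℕ) : ℝ) = (n : ℝ) - 1 - t := by
      have : t ≤ n - 1 := Nat.le_sub_one_of_lt htn
      push_cast [Nat.sub_sub, Nat.cast_sub (by omega : 1 + t ≤ n)]
      ring
    rw [h1]; ring
  -- nonvanishing of the Z's along the path
  have hZt : ∀ t ∈ Finset.range n, f t ≠ 0 := fun t ht =>
    hZ t (le_of_lt (Finset.mem_range.mp ht))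
  have hfprod : (∏ t ∈ Finset.range n, f t) ≠ 0 := Finset.prod_ne_zero_iff.mpr hZt
  -- main computation
  have hmain : (∏ t : Fin n,
      y (path t) * Zpoly d m A (bp ((t : ℕ) + 1)) y
        / (((n : ℝ) - (t : ℕ)) * Zpoly d m A (bp (t : ℕ)) y))
      = (∏ j, y j ^ u j) / ((n.factorial : ℝ) * Zpoly d m A b y) := by
    rw [Finset.prod_div_distrib, Finset.prod_mul_distrib, Finset.prod_mul_distrib, hY]
    rw [Fin.prod_univ_eq_prod_range (fun t => Zpoly d m A (bp (t + 1)) y) n]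
    rw [Fin.prod_univ_eq_prod_range (fun t => Zpoly d m A (bp t) y) n]
    rw [Fin.prod_univ_eq_prod_range (fun t => ((n : ℝ) - t)) n]
    rw [hfact]
    have h0 : f 0 = Zpoly d m A b y := by simp only [hf, hb0]
    have : (∏ t ∈ Finset.range n, f (t + 1))
        = (∏ t ∈ Finset.range n, f t) / Zpoly d m A b y := by
      rw [eq_div_iff hZb, ← h0, htel]
    show (∏ j, y j ^ u j) * (∏ t ∈ Finset.range n, f (t + 1))
        / ((n.factorial : ℝ) * ∏ t ∈ Finset.range n, f t)
        = (∏ j, y j ^ u j) / ((n.factorial : ℝ) * Zpoly d m A b y)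
    rw [this]
    have hnf : (n.factorial : ℝ) ≠ 0 := Nat.cast_ne_zero.mpr n.factorial_ne_zero
    field_simp
  refine ⟨hmain, ?_⟩
  rw [hmain]
  have hnf : (n.factorial : ℝ) ≠ 0 := Nat.cast_ne_zero.mpr n.factorial_ne_zero
  have hP : (∏ j, (Nat.factorial (u j) : ℝ)) ≠ 0 :=
    Finset.prod_ne_zero_iff.mpr fun j _ => Nat.cast_ne_zero.mpr (u j).factorial_ne_zero
  field_simp
end

section
/- Gauss's hypergeometric theorem: for Re(γ) > Re(α+β) and −γ ∉ N_0, the series ₂F₁(α,β;γ;1) = Σ_{u≥0} (α)_u(β)_u/((γ)_u u!) equals Γ(γ)Γ(γ−α−β)/(Γ(γ−α)Γ(γ−β)). -/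
open Filter Finset Topology

namespace Gauss2F1

noncomputable def poch (x : ℂ) (n : ℕ) : ℂ := (ascPochhammer ℂ n).eval x

lemma poch_zero (x : ℂ) : poch x 0 = 1 := by simp [poch]

lemma poch_succ (x : ℂ) (n : ℕ) : poch x (n + 1) = poch x n * (x + n) := by
  simp [poch, ascPochhammer_succ_eval]

lemma poch_eq_prod (x : ℂ) (n : ℕ) : poch x n = ∏ i ∈ Finset.range n, (x + i) := by
  induction n with
  | zero => simp [poch]
  | succ n ih => rw [poch_succ, ih, Finset.prod_range_succ]

lemma poch_succ_left (x : ℂ) (n : ℕ) : poch x (n + 1) = x * poch (x + 1) n := by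
  rw [poch_eq_prod, poch_eq_prod, Finset.prod_range_succ']
  rw [mul_comm]
  congr 1
  · simp
  · exact Finset.prod_congr rfl (by intro i _; push_cast; ring)

lemma poch_ne_zero {x : ℂ} (hx : ∀ n : ℕ, x ≠ -n) (n : ℕ) : poch x n ≠ 0 := by
  rw [poch_eq_prod]
  exact Finset.prod_ne_zero_iff.2 fun i _ => by
    intro h
    exact hx i (by linear_combination h)

lemma poch_ne_zero_of_re_pos {x : ℂ} (hx : 0 < x.re) (n : ℕ) : poch x n ≠ 0 :=
  poch_ne_zero (fun m h => by
    have : x.re = -(m:ℝ) := by rw [h]; simp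
    simp [this] at hx
    linarith [hx, Nat.cast_nonneg (α := ℝ) m]) n

noncomputable def T (α β γ : ℂ) (u : ℕ) : ℂ :=
  poch α u * poch β u / (poch γ u * u.factorial)

lemma T_zero (α β γ : ℂ) : T α β γ 0 = 1 := by simp [T, poch_zero]

lemma T_succ (α β γ : ℂ) (hγ : ∀ n : ℕ, γ ≠ -n) (u : ℕ) :
    T α β γ (u + 1) = T α β γ u * ((α + u) * (β + u)) / ((γ + u) * (u + 1)) := by
  have h1 : poch γ u ≠ 0 := poch_ne_zero hγ u
  have h2 : (γ + u) ≠ 0 := fun h => hγ u (by linear_combination h)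
  have h3 : (u.factorial : ℂ) ≠ 0 := Nat.cast_ne_zero.2 u.factorial_ne_zero
  have h4 : ((u + 1 : ℕ) : ℂ) ≠ 0 := Nat.cast_ne_zero.2 (Nat.succ_ne_zero u)
  rw [T, T, poch_succ, poch_succ, poch_succ, Nat.factorial_succ]
  push_cast
  field_simp

-- Step A : ‖z + x‖ ≤ x + z.re + ‖z‖^2/x for x ≥ 2‖z‖, x > 0
lemma stepA (z : ℂ) {x : ℝ} (hx : 0 < x) (hx2 : 2 * ‖z‖ ≤ x) :
    ‖z + x‖ ≤ x + z.re + ‖z‖ ^ 2 / x := by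
  have hzre : |z.re| ≤ ‖z‖ := Complex.abs_re_le_norm z
  have hR : 0 ≤ x + z.re + ‖z‖ ^ 2 / x := by
    have : -‖z‖ ≤ z.re := neg_le_of_abs_le hzre
    have h2 : 0 ≤ ‖z‖ ^ 2 / x := by positivity
    nlinarith [norm_nonneg z]
  have hsq : ‖z + x‖ ^ 2 ≤ (x + z.re + ‖z‖ ^ 2 / x) ^ 2 := by
    have h1 : ‖z + (x:ℂ)‖ ^ 2 = (z.re + x) ^ 2 + z.im ^ 2 := by
      rw [Complex.sq_norm]
      simp [Complex.normSq_apply]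
      ring
    have h2 : ‖z‖ ^ 2 = z.re ^ 2 + z.im ^ 2 := by
      rw [Complex.sq_norm]
      simp [Complex.normSq_apply]
      ring
    rw [h1]
    have hrepos : x / 2 ≤ x + z.re := by
      have : -‖z‖ ≤ z.re := neg_le_of_abs_le hzre
      nlinarith
    have key : z.im ^ 2 ≤ 2 * (x + z.re) * (‖z‖ ^ 2 / x) := by
      have h3 : z.im ^ 2 ≤ ‖z‖ ^ 2 := by nlinarith
      have : ‖z‖ ^ 2 ≤ 2 * (x + z.re) * (‖z‖ ^ 2 / x) := by
        rw [mul_div_assoc', le_div_iff₀ hx]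
        nlinarith [sq_nonneg (‖z‖)]
      linarith
    have hd : 0 ≤ (‖z‖ ^ 2 / x) ^ 2 := by positivity
    nlinarith
  exact (pow_le_pow_iff_left₀ (norm_nonneg _) hR two_ne_zero).mp hsq

-- polynomial inequality: (x+a+A/x)(x+b+B/x) ≤ (x+c)(x-δ) for large x
lemma stepC {a b c A B δ x : ℝ} (hδ : 0 < δ) (hsum : c - δ - a - b = δ)
    (hA : 0 ≤ A) (hB : 0 ≤ B) (hx1 : 1 ≤ x)
    (hxK : |c * δ + A + B + a * b| + |a * B + b * A| + |A * B| ≤ δ * x) :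
    (x + a + A / x) * (x + b + B / x) ≤ (x + c) * (x - δ) := by
  have hx0 : 0 < x := by linarith
  have expand : (x + a + A / x) * (x + b + B / x) * x ^ 2
      = x ^ 4 + (a + b) * x ^ 3 + (A + B + a * b) * x ^ 2 + (a * B + b * A) * x + A * B := by
    field_simp
    ring
  have hx2 : x ≤ x ^ 2 := by nlinarith
  have goal2 : (x + a + A / x) * (x + b + B / x) * x ^ 2 ≤ (x + c) * (x - δ) * x ^ 2 := by
    rw [expand]
    have h2 : c * δ + A + B + a * b ≤ |c * δ + A + B + a * b| := le_abs_self _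
    have h3 : a * B + b * A ≤ |a * B + b * A| := le_abs_self _
    have h4 : A * B ≤ |A * B| := le_abs_self _
    have habs2 : (0:ℝ) ≤ |c * δ + A + B + a * b| := abs_nonneg _
    have habs3 : (0:ℝ) ≤ |a * B + b * A| := abs_nonneg _
    have habs4 : (0:ℝ) ≤ |A * B| := abs_nonneg _
    have h5 := mul_le_mul_of_nonneg_right hxK (sq_nonneg x)
    have h6 := mul_le_mul_of_nonneg_right h2 (sq_nonneg x)
    have h7 := mul_le_mul_of_nonneg_right h3 hx0.le
    have h8 := mul_le_mul_of_nonneg_left hx2 habs3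
    have h9 := mul_le_mul_of_nonneg_left hx2 habs4
    have hc : c = 2 * δ + a + b := by linarith
    subst hc
    nlinarith [sq_nonneg x]
  have hxx : 0 < x ^ 2 := pow_pos hx0 2
  exact le_of_mul_le_mul_right goal2 hxx

lemma key_ineq (α β γ : ℂ) (h1 : (α + β).re < γ.re) :
    ∀ᶠ u : ℕ in atTop,
      ‖α + (u:ℂ)‖ * ‖β + (u:ℂ)‖ ≤ ‖γ + (u:ℂ)‖ * ((u:ℝ) - (γ.re - (α + β).re) / 2) := by
  set δ : ℝ := (γ.re - (α + β).re) / 2 with hδdef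
  have hδ : 0 < δ := by rw [hδdef]; linarith
  set a := α.re; set b := β.re; set c := γ.re
  set A := ‖α‖ ^ 2; set B := ‖β‖ ^ 2
  obtain ⟨N, hN⟩ := exists_nat_ge (max (max 1 (2 * ‖α‖)) (max (2 * ‖β‖)
    (max (|c| + δ) ((|c * δ + A + B + a * b| + |a * B + b * A| + |A * B|) / δ))))
  refine eventually_atTop.2 ⟨N + 1, fun u hu => ?_⟩
  have hxN : (N:ℝ) ≤ (u:ℝ) := by exact_mod_cast Nat.le_of_succ_le hu
  set x : ℝ := (u:ℝ) with hxdef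
  have hx1 : 1 ≤ x := le_trans (le_trans (le_max_left _ _) (le_max_left _ _)) (hN.trans hxN)
  have hx0 : 0 < x := by linarith
  have hxa : 2 * ‖α‖ ≤ x := le_trans (le_trans (le_max_right _ _) (le_max_left _ _)) (hN.trans hxN)
  have hxb : 2 * ‖β‖ ≤ x :=
    le_trans (le_trans (le_max_left _ _) (le_max_right _ _)) (hN.trans hxN)
  have hxc : |c| + δ ≤ x :=
    le_trans (le_trans (le_max_left _ _) (le_trans (le_max_right _ _) (le_max_right _ _)))
      (hN.trans hxN)
  have hxK : |c * δ + A + B + a * b| + |a * B + b * A| + |A * B| ≤ δ * x := by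
    have : (|c * δ + A + B + a * b| + |a * B + b * A| + |A * B|) / δ ≤ x :=
      le_trans (le_trans (le_max_right _ _) (le_trans (le_max_right _ _) (le_max_right _ _)))
        (hN.trans hxN)
    rw [div_le_iff₀ hδ] at this
    linarith
  have hA := stepA α hx0 hxa
  have hB := stepA β hx0 hxb
  have hsum : c - δ - a - b = δ := by
    have : (α + β).re = a + b := by simp [Complex.add_re]; rfl
    simp [hδdef, this]
    ring
  have hC := stepC hδ hsum (sq_nonneg ‖α‖) (sq_nonneg ‖β‖) hx1 hxK
  have hγlow : x + c ≤ ‖γ + (u:ℂ)‖ := by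
    have : (γ + (u:ℂ)).re = c + x := by simp [Complex.add_re]; rfl
    calc x + c = (γ + (u:ℂ)).re := by rw [this]; ring
    _ ≤ ‖γ + (u:ℂ)‖ := by
        exact Complex.re_le_norm _
  have hαn : (0:ℝ) ≤ ‖α + (u:ℂ)‖ := norm_nonneg _
  have hβub : ‖β + (u:ℂ)‖ ≤ x + b + B / x := stepA β hx0 hxb
  have hαub : ‖α + (u:ℂ)‖ ≤ x + a + A / x := stepA α hx0 hxa
  have hβub0 : (0:ℝ) ≤ x + b + B / x := le_trans (norm_nonneg _) hβub
  have hxδ : 0 ≤ x - δ := by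
    have : 0 ≤ |c| := abs_nonneg c
    linarith
  calc ‖α + (u:ℂ)‖ * ‖β + (u:ℂ)‖ ≤ (x + a + A / x) * (x + b + B / x) :=
        mul_le_mul hαub hβub (norm_nonneg _) (le_trans hαn hαub)
  _ ≤ (x + c) * (x - δ) := hC
  _ ≤ ‖γ + (u:ℂ)‖ * (x - δ) := mul_le_mul_of_nonneg_right hγlow hxδ

lemma bernoulli_step {δ x : ℝ} (hδ : 0 < δ) (hx : 1 ≤ x) :
    (x - δ) * (x + 1) ^ (1 + δ) ≤ x ^ (1 + δ) * (x + 1) := by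
  have hx1 : 0 < x + 1 := by linarith
  have hs : -1 ≤ -(1 / (x + 1)) := by
    have : 1 / (x + 1) ≤ 1 := by rw [div_le_one hx1]; linarith
    linarith
  have hB := one_add_mul_self_le_rpow_one_add hs (le_add_of_nonneg_right hδ.le :
    (1:ℝ) ≤ 1 + δ)
  have h1 : (1 : ℝ) + -(1 / (x + 1)) = x / (x + 1) := by field_simp; ring
  rw [h1, Real.div_rpow (by linarith) (by linarith)] at hB
  have hpow : (0:ℝ) < (x + 1) ^ (1 + δ) := Real.rpow_pos_of_pos hx1 _
  rw [le_div_iff₀ hpow] at hB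
  have e : x - δ = (1 + (1 + δ) * -(1 / (x + 1))) * (x + 1) := by field_simp; ring
  calc (x - δ) * (x + 1) ^ (1 + δ)
      = (1 + (1 + δ) * -(1 / (x + 1))) * (x + 1) ^ (1 + δ) * (x + 1) := by rw [e]; ring
  _ ≤ x ^ (1 + δ) * (x + 1) := mul_le_mul_of_nonneg_right hB (by linarith)

lemma norm_T_succ (α β γ : ℂ) (hγ : ∀ n : ℕ, γ ≠ -n) (u : ℕ) :
    ‖T α β γ (u + 1)‖
      = ‖T α β γ u‖ * (‖α + (u:ℂ)‖ * ‖β + (u:ℂ)‖) / (‖γ + (u:ℂ)‖ * ((u:ℝ) + 1)) := by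
  rw [T_succ α β γ hγ u, norm_div, norm_mul, norm_mul, norm_mul]
  have h : ((u:ℂ) + 1) = ((u + 1 : ℕ) : ℂ) := by push_cast; ring
  rw [h, Complex.norm_natCast]
  push_cast
  ring

lemma exists_pow_bound (α β γ : ℂ) (h1 : (α + β).re < γ.re) (hγ : ∀ n : ℕ, γ ≠ -n) :
    ∃ δ : ℝ, 0 < δ ∧ ∃ C : ℝ, 0 ≤ C ∧
      ∀ u : ℕ, 1 ≤ u → ‖T α β γ u‖ ≤ C * (u:ℝ) ^ (-(1 + δ)) := by
  set δ : ℝ := (γ.re - (α + β).re) / 2 with hδdef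
  have hδ : 0 < δ := by rw [hδdef]; linarith
  refine ⟨δ, hδ, ?_⟩
  obtain ⟨N₀, hN₀⟩ := eventually_atTop.1 (key_ineq α β γ h1)
  set M : ℕ := max N₀ 1 with hMdef
  have hM1 : 1 ≤ M := le_max_right _ _
  -- decreasing step
  have decr : ∀ u : ℕ, M ≤ u →
      ‖T α β γ (u + 1)‖ * ((u:ℝ) + 1) ^ (1 + δ) ≤ ‖T α β γ u‖ * ((u:ℝ)) ^ (1 + δ) := by
    intro u hu
    have hu1 : 1 ≤ u := le_trans hM1 hu
    have hx1 : (1:ℝ) ≤ (u:ℝ) := by exact_mod_cast hu1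
    set x : ℝ := (u:ℝ)
    have hki : ‖α + (u:ℂ)‖ * ‖β + (u:ℂ)‖ ≤ ‖γ + (u:ℂ)‖ * (x - δ) :=
      hN₀ u (le_trans (le_max_left _ _) hu)
    have hγu : γ + (u:ℂ) ≠ 0 := fun h => hγ u (by linear_combination h)
    have hγpos : 0 < ‖γ + (u:ℂ)‖ := norm_pos_iff.2 hγu
    have hx10 : (0:ℝ) < x + 1 := by linarith
    rw [norm_T_succ α β γ hγ u]
    rw [div_mul_eq_mul_div, div_le_iff₀ (by positivity)]
    have hb := bernoulli_step hδ hx1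
    calc ‖T α β γ u‖ * (‖α + (u:ℂ)‖ * ‖β + (u:ℂ)‖) * (x + 1) ^ (1 + δ)
        ≤ ‖T α β γ u‖ * (‖γ + (u:ℂ)‖ * (x - δ)) * (x + 1) ^ (1 + δ) := by
          have := mul_le_mul_of_nonneg_left hki (norm_nonneg (T α β γ u))
          exact mul_le_mul_of_nonneg_right this (Real.rpow_nonneg (by linarith) _)
    _ = ‖T α β γ u‖ * ‖γ + (u:ℂ)‖ * ((x - δ) * (x + 1) ^ (1 + δ)) := by ring
    _ ≤ ‖T α β γ u‖ * ‖γ + (u:ℂ)‖ * (x ^ (1 + δ) * (x + 1)) := by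
          apply mul_le_mul_of_nonneg_left hb
          positivity
    _ = ‖T α β γ u‖ * x ^ (1 + δ) * (‖γ + (u:ℂ)‖ * (x + 1)) := by ring
  -- boundedness
  have bdd : ∀ u : ℕ, M ≤ u →
      ‖T α β γ u‖ * ((u:ℝ)) ^ (1 + δ) ≤ ‖T α β γ M‖ * ((M:ℝ)) ^ (1 + δ) := by
    intro u hu
    induction u, hu using Nat.le_induction with
    | base => exact le_rfl
    | succ n hn ih =>
        have := decr n hn
        push_cast
        push_cast at this ih
        linarith
  set C : ℝ := ∑ v ∈ Finset.range (M + 1), ‖T α β γ v‖ * ((v:ℝ)) ^ (1 + δ) with hCdef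
  have hterm : ∀ v ∈ Finset.range (M + 1), 0 ≤ ‖T α β γ v‖ * ((v:ℝ)) ^ (1 + δ) := by
    intro v _
    positivity
  have hC0 : 0 ≤ C := Finset.sum_nonneg hterm
  refine ⟨C, hC0, fun u hu => ?_⟩
  have hx0 : (0:ℝ) < (u:ℝ) := by exact_mod_cast hu
  have hkey : ‖T α β γ u‖ * ((u:ℝ)) ^ (1 + δ) ≤ C := by
    rcases le_or_gt u M with h | h
    · exact Finset.single_le_sum hterm (Finset.mem_range.2 (Nat.lt_succ_of_le h))
    · exact le_trans (bdd u h.le)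
        (Finset.single_le_sum hterm (Finset.mem_range.2 (Nat.lt_succ_self M)))
  have hxp : (0:ℝ) < ((u:ℝ)) ^ (1 + δ) := Real.rpow_pos_of_pos hx0 _
  rw [Real.rpow_neg hx0.le, ← div_eq_mul_inv, le_div_iff₀ hxp]
  exact hkey

lemma summable_T (α β γ : ℂ) (h1 : (α + β).re < γ.re) (hγ : ∀ n : ℕ, γ ≠ -n) :
    Summable (T α β γ) := by
  obtain ⟨δ, hδ, C, hC0, hC⟩ := exists_pow_bound α β γ h1 hγ
  apply Summable.of_norm_bounded_eventually_nat (g := fun u => C * (u:ℝ) ^ (-(1 + δ)))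
  · exact (Real.summable_nat_rpow.2 (by linarith)).mul_left C
  · exact eventually_atTop.2 ⟨1, hC⟩

lemma tendsto_mul_T (α β γ : ℂ) (h1 : (α + β).re < γ.re) (hγ : ∀ n : ℕ, γ ≠ -n) :
    Tendsto (fun u : ℕ => (u:ℝ) * ‖T α β γ u‖) atTop (𝓝 0) := by
  obtain ⟨δ, hδ, C, hC0, hC⟩ := exists_pow_bound α β γ h1 hγ
  apply squeeze_zero' (g := fun u : ℕ => C * (u:ℝ) ^ (-δ))
  · exact Eventually.of_forall fun u => by positivity
  · refine eventually_atTop.2 ⟨1, fun u hu => ?_⟩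
    have hx0 : (0:ℝ) < (u:ℝ) := by exact_mod_cast hu
    have h := hC u hu
    calc (u:ℝ) * ‖T α β γ u‖ ≤ (u:ℝ) * (C * (u:ℝ) ^ (-(1 + δ))) :=
          mul_le_mul_of_nonneg_left h hx0.le
    _ = C * ((u:ℝ) ^ (1:ℝ) * (u:ℝ) ^ (-(1 + δ))) := by rw [Real.rpow_one]; ring
    _ = C * (u:ℝ) ^ (-δ) := by rw [← Real.rpow_add hx0]; norm_num
  · have := (tendsto_rpow_neg_atTop hδ).comp tendsto_natCast_atTop_atTop (α := ℕ)
    simpa using this.const_mul C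


lemma T_shift (α β γ : ℂ) (hγ : ∀ n : ℕ, γ ≠ -n) (u : ℕ) :
    T α β (γ + 1) u * (γ + u) = T α β γ u * γ := by
  have hγ1 : ∀ n : ℕ, γ + 1 ≠ -n := by
    intro n h
    exact hγ (n + 1) (by push_cast; linear_combination h)
  have hp1 : poch (γ + 1) u ≠ 0 := poch_ne_zero hγ1 u
  have hp0 : poch γ u ≠ 0 := poch_ne_zero hγ u
  have hrel : γ * poch (γ + 1) u = poch γ u * (γ + u) := by
    rw [← poch_succ_left, poch_succ]
  have hf : (u.factorial : ℂ) ≠ 0 := Nat.cast_ne_zero.2 u.factorial_ne_zero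
  rw [T, T, div_mul_eq_mul_div, div_mul_eq_mul_div,
    div_eq_div_iff (mul_ne_zero hp1 hf) (mul_ne_zero hp0 hf)]
  linear_combination -(poch α u * poch β u * (u.factorial : ℂ)) * hrel

lemma F_id (α β γ : ℂ) (hγ : ∀ n : ℕ, γ ≠ -n) (u : ℕ) :
    γ * (γ - α - β) * T α β γ u - (γ - α) * (γ - β) * T α β (γ + 1) u
      = γ * ((u:ℂ) * T α β γ u) - γ * (((u:ℂ) + 1) * T α β γ (u + 1)) := by
  have hγu : γ + (u:ℂ) ≠ 0 := fun h => hγ u (by linear_combination h)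
  have hu1 : ((u:ℂ) + 1) ≠ 0 := by
    have : ((u:ℂ) + 1) = ((u + 1 : ℕ) : ℂ) := by push_cast; ring
    rw [this]
    exact Nat.cast_ne_zero.2 (Nat.succ_ne_zero u)
  have e1 := T_shift α β γ hγ u
  have e2 : ((u:ℂ) + 1) * T α β γ (u + 1) * (γ + u) = T α β γ u * ((α + u) * (β + u)) := by
    rw [T_succ α β γ hγ u]
    field_simp
  apply mul_right_cancel₀ hγu
  linear_combination (-(γ - α) * (γ - β)) * e1 + γ * e2

lemma telescope (α β γ : ℂ) (hγ : ∀ n : ℕ, γ ≠ -n) (n : ℕ) :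
    ∑ u ∈ Finset.range n,
        (γ * (γ - α - β) * T α β γ u - (γ - α) * (γ - β) * T α β (γ + 1) u)
      = -(γ * (n:ℂ) * T α β γ n) := by
  have : ∀ u : ℕ, γ * (γ - α - β) * T α β γ u - (γ - α) * (γ - β) * T α β (γ + 1) u
      = (fun v : ℕ => γ * (v:ℂ) * T α β γ v) u - (fun v : ℕ => γ * (v:ℂ) * T α β γ v) (u + 1) := by
    intro u
    have := F_id α β γ hγ u
    simp only [this]
    push_cast
    ring
  rw [Finset.sum_congr rfl (fun u _ => this u), Finset.sum_range_sub' (fun v : ℕ => γ * (v:ℂ) * T α β γ v) n]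
  simp

lemma recursion (α β γ : ℂ) (h1 : (α + β).re < γ.re) (hγ : ∀ n : ℕ, γ ≠ -n) :
    γ * (γ - α - β) * ∑' u, T α β γ u = (γ - α) * (γ - β) * ∑' u, T α β (γ + 1) u := by
  have h1' : (α + β).re < (γ + 1).re := by
    rw [Complex.add_re γ 1, Complex.one_re]
    linarith
  have hγ' : ∀ n : ℕ, γ + 1 ≠ -n := by
    intro n h
    exact hγ (n + 1) (by push_cast; linear_combination h)
  have S1 := summable_T α β γ h1 hγ
  have S2 := summable_T α β (γ + 1) h1' hγ'
  have H : HasSum (fun u => γ * (γ - α - β) * T α β γ u - (γ - α) * (γ - β) * T α β (γ + 1) u)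
      (γ * (γ - α - β) * ∑' u, T α β γ u - (γ - α) * (γ - β) * ∑' u, T α β (γ + 1) u) :=
    (S1.hasSum.mul_left _).sub (S2.hasSum.mul_left _)
  have Ht := H.tendsto_sum_nat
  have Ht' : Tendsto (fun n : ℕ => -(γ * (n:ℂ) * T α β γ n)) atTop
      (𝓝 (γ * (γ - α - β) * ∑' u, T α β γ u - (γ - α) * (γ - β) * ∑' u, T α β (γ + 1) u)) := by
    refine Ht.congr fun n => ?_
    exact telescope α β γ hγ n
  have Hz : Tendsto (fun n : ℕ => -(γ * (n:ℂ) * T α β γ n)) atTop (𝓝 0) := by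
    rw [tendsto_zero_iff_norm_tendsto_zero]
    have : ∀ n : ℕ, ‖-(γ * (n:ℂ) * T α β γ n)‖ = ‖γ‖ * ((n:ℝ) * ‖T α β γ n‖) := by
      intro n
      rw [norm_neg, norm_mul, norm_mul, Complex.norm_natCast]
      ring
    simp only [this]
    simpa using (tendsto_mul_T α β γ h1 hγ).const_mul ‖γ‖
  have := tendsto_nhds_unique Ht' Hz
  linear_combination this

noncomputable def P (α β γ : ℂ) (n : ℕ) : ℂ :=
  poch (γ - α) n * poch (γ - β) n / (poch γ n * poch (γ - α - β) n)

lemma iterate (α β γ : ℂ) (h1 : (α + β).re < γ.re) (hγ : ∀ n : ℕ, γ ≠ -n) (n : ℕ) :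
    (∑' u, T α β γ u) = P α β γ n * ∑' u, T α β (γ + n) u := by
  have hρ : 0 < (γ - α - β).re := by
    simp only [Complex.sub_re]
    have : (α + β).re = α.re + β.re := Complex.add_re α β
    linarith
  induction n with
  | zero => simp [P, poch_zero]
  | succ n ih =>
    have h1n : (α + β).re < (γ + (n:ℂ)).re := by
      rw [Complex.add_re γ (n:ℂ), Complex.natCast_re]
      have : (0:ℝ) ≤ (n:ℝ) := Nat.cast_nonneg n
      linarith
    have hγn : ∀ m : ℕ, γ + (n:ℂ) ≠ -m := fun m h => hγ (m + n) (by push_cast; linear_combination h)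
    have hrec := recursion α β (γ + n) h1n hγn
    have hcast : (γ + (n:ℂ)) + 1 = γ + ((n + 1 : ℕ) : ℂ) := by push_cast; ring
    rw [hcast] at hrec
    set c1 : ℂ := (γ + n) * (γ + n - α - β) with hc1
    set c2 : ℂ := (γ + n - α) * (γ + n - β) with hc2
    have hγn0 : γ + (n:ℂ) ≠ 0 := fun h => hγ n (by linear_combination h)
    have hρn0 : γ + (n:ℂ) - α - β ≠ 0 := by
      intro h
      have : (γ + (n:ℂ) - α - β).re = 0 := by rw [h]; simp
      rw [Complex.sub_re, Complex.sub_re, Complex.add_re, Complex.natCast_re] at this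
      have hn : (0:ℝ) ≤ (n:ℝ) := Nat.cast_nonneg n
      rw [Complex.sub_re, Complex.sub_re] at hρ
      linarith
    have hρn0' : γ - α - β + (n:ℂ) ≠ 0 := fun h => hρn0 (by linear_combination h)
    have hc10 : c1 ≠ 0 := mul_ne_zero hγn0 hρn0
    have hpγ : poch γ n ≠ 0 := poch_ne_zero hγ n
    have hpρ : poch (γ - α - β) n ≠ 0 := poch_ne_zero_of_re_pos hρ n
    have hpγ' : poch γ (n+1) ≠ 0 := poch_ne_zero hγ (n+1)
    have hpρ' : poch (γ - α - β) (n+1) ≠ 0 := poch_ne_zero_of_re_pos hρ (n+1)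
    have Pstep : P α β γ (n + 1) * c1 = P α β γ n * c2 := by
      rw [P, P, poch_succ (γ - α) n, poch_succ (γ - β) n, poch_succ γ n, poch_succ (γ - α - β) n]
      rw [div_mul_eq_mul_div, div_mul_eq_mul_div,
        div_eq_div_iff (by exact mul_ne_zero (mul_ne_zero hpγ hγn0) (mul_ne_zero hpρ hρn0'))
          (mul_ne_zero hpγ hpρ)]
      ring
    apply mul_left_cancel₀ hc10
    rw [ih]
    linear_combination (P α β γ n) * hrec - (∑' u, T α β (γ + ((n + 1 : ℕ) : ℂ)) u) * Pstep

lemma norm_poch_le (z : ℂ) (n : ℕ) :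
    ‖poch z n‖ ≤ ∏ i ∈ Finset.range n, (‖z‖ + i) := by
  rw [poch_eq_prod, norm_prod]
  apply Finset.prod_le_prod (fun i _ => norm_nonneg _)
  intro i _
  calc ‖z + (i:ℂ)‖ ≤ ‖z‖ + ‖(i:ℂ)‖ := norm_add_le _ _
  _ = ‖z‖ + i := by rw [Complex.norm_natCast]

lemma le_norm_poch {z : ℂ} (hz : 0 ≤ z.re) (n : ℕ) :
    ∏ i ∈ Finset.range n, (z.re + i) ≤ ‖poch z n‖ := by
  rw [poch_eq_prod, norm_prod]
  apply Finset.prod_le_prod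
  · intro i _
    positivity
  · intro i _
    have : (z + (i:ℂ)).re = z.re + i := by simp [Complex.add_re]
    calc z.re + (i:ℝ) = (z + (i:ℂ)).re := this.symm
    _ ≤ ‖z + (i:ℂ)‖ := by exact Complex.re_le_norm _

lemma tail (α β γ : ℂ) (h1 : (α + β).re < γ.re) (hγ : ∀ n : ℕ, γ ≠ -n) :
    Tendsto (fun n : ℕ => ∑' u, T α β (γ + n) u) atTop (𝓝 1) := by
  set M : ℝ := ‖α‖ + ‖β‖ + 2 with hMdef
  have hM0 : (0:ℝ) < M := by positivity
  set g : ℕ → ℝ := fun u =>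
    (∏ i ∈ Finset.range u, (‖α‖ + i)) * (∏ i ∈ Finset.range u, (‖β‖ + i))
      / ((∏ i ∈ Finset.range u, (M + i)) * u.factorial) with hgdef
  -- g is summable: it equals the norm of T at real parameters
  have hMne : ∀ n : ℕ, (M:ℂ) ≠ -n := by
    intro n h
    have : ((M:ℂ)).re = (-(n:ℂ)).re := by rw [h]
    simp at this
    have hn : (0:ℝ) ≤ (n:ℝ) := Nat.cast_nonneg n
    linarith
  have hre : ((‖α‖:ℂ) + (‖β‖:ℂ)).re < ((M:ℂ)).re := by
    simp [hMdef]
  have hpochR : ∀ (r : ℝ) (u : ℕ), poch ((r:ℝ):ℂ) u = ((∏ i ∈ Finset.range u, (r + i) : ℝ) : ℂ) := by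
    intro r u
    rw [poch_eq_prod, Complex.ofReal_prod]
    exact Finset.prod_congr rfl fun i _ => by push_cast; ring
  have hgeq : ∀ u : ℕ, g u = ‖T ((‖α‖:ℝ):ℂ) ((‖β‖:ℝ):ℂ) ((M:ℝ):ℂ) u‖ := by
    intro u
    rw [T, hpochR, hpochR, hpochR, norm_div, norm_mul, norm_mul]
    rw [Complex.norm_real, Complex.norm_real, Complex.norm_real, Complex.norm_natCast]
    rw [hgdef]
    have p1 : (0:ℝ) ≤ ∏ i ∈ Finset.range u, (‖α‖ + i) :=
      Finset.prod_nonneg fun i _ => by positivity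
    have p2 : (0:ℝ) ≤ ∏ i ∈ Finset.range u, (‖β‖ + i) :=
      Finset.prod_nonneg fun i _ => by positivity
    have p3 : (0:ℝ) ≤ ∏ i ∈ Finset.range u, (M + i) :=
      Finset.prod_nonneg fun i _ => by positivity
    rw [Real.norm_of_nonneg p1, Real.norm_of_nonneg p2, Real.norm_of_nonneg p3]
  have hgsum : Summable g := by
    rw [show g = fun u => ‖T ((‖α‖:ℝ):ℂ) ((‖β‖:ℝ):ℂ) ((M:ℝ):ℂ) u‖ from funext hgeq]
    obtain ⟨δ, hδ, C, hC0, hC⟩ := exists_pow_bound _ _ _ hre hMne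
    apply Summable.of_norm_bounded_eventually_nat (g := fun u => C * (u:ℝ) ^ (-(1 + δ)))
    · exact (Real.summable_nat_rpow.2 (by linarith)).mul_left C
    · refine eventually_atTop.2 ⟨1, fun u hu => ?_⟩
      rw [Real.norm_of_nonneg (norm_nonneg _)]
      exact hC u hu
  -- limit function
  set a : ℕ → ℂ := fun u => if u = 0 then 1 else 0 with hadef
  have hsa : ∑' u, a u = 1 := by
    rw [hadef]
    exact tsum_ite_eq 0 1
  have main : Tendsto (fun n : ℕ => ∑' u, T α β (γ + n) u) atTop (𝓝 (∑' u, a u)) := by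
    apply tendsto_tsum_of_dominated_convergence hgsum
    · -- pointwise convergence
      intro u
      rcases Nat.eq_zero_or_pos u with rfl | hu
      · simp only [T_zero, hadef]
        exact tendsto_const_nhds
      · have ha : a u = 0 := by simp [hadef]; omega
        rw [ha]
        rw [tendsto_zero_iff_norm_tendsto_zero]
        -- ‖T α β (γ+n) u‖ ≤ K / (γ.re + n) eventually
        set K : ℝ := (∏ i ∈ Finset.range u, (‖α‖ + i)) * (∏ i ∈ Finset.range u, (‖β‖ + i)) with hK
        have hK0 : 0 ≤ K := mul_nonneg (Finset.prod_nonneg fun i _ => by positivity)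
          (Finset.prod_nonneg fun i _ => by positivity)
        apply squeeze_zero' (g := fun n : ℕ => K / (γ.re + n))
        · exact Eventually.of_forall fun n => norm_nonneg _
        · obtain ⟨n₀, hn₀⟩ := exists_nat_ge (1 - γ.re)
          refine eventually_atTop.2 ⟨n₀, fun n hn => ?_⟩
          have hc : (1:ℝ) ≤ γ.re + n := by
            have : (n₀:ℝ) ≤ n := by exact_mod_cast hn
            linarith
          have hnum : ‖poch α u * poch β u‖ ≤ K := by
            rw [norm_mul, hK]
            exact mul_le_mul (norm_poch_le α u) (norm_poch_le β u) (norm_nonneg _)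
              (Finset.prod_nonneg fun i _ => by positivity)
          have hden : γ.re + n ≤ ‖poch (γ + n) u‖ * u.factorial := by
            have hz : (0:ℝ) ≤ (γ + (n:ℂ)).re := by
              rw [Complex.add_re γ, Complex.natCast_re]; linarith
            have h2 : ∏ i ∈ Finset.range u, ((γ + (n:ℂ)).re + i) ≤ ‖poch (γ + n) u‖ :=
              le_norm_poch hz u
            have h3 : γ.re + n ≤ ∏ i ∈ Finset.range u, ((γ + (n:ℂ)).re + i) := by
              have hre : (γ + (n:ℂ)).re = γ.re + n := by
                rw [Complex.add_re γ, Complex.natCast_re]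
              have hcong : ∏ i ∈ Finset.range u, ((γ + (n:ℂ)).re + (i:ℝ))
                  = ∏ i ∈ Finset.range u, (γ.re + (n:ℝ) + (i:ℝ)) :=
                Finset.prod_congr rfl fun i _ => by rw [hre]
              rw [hcong]
              obtain ⟨v, rfl⟩ := Nat.exists_eq_succ_of_ne_zero hu.ne'
              rw [Finset.prod_range_succ', mul_comm]
              have hone : ∏ i ∈ Finset.range v, (1:ℝ) ≤
                  ∏ i ∈ Finset.range v, (γ.re + (n:ℝ) + ((i + 1 : ℕ):ℝ)) := by
                apply Finset.prod_le_prod (fun i _ => by norm_num)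
                intro i _
                have : (0:ℝ) ≤ ((i + 1 : ℕ):ℝ) := by positivity
                linarith
              simp only [Finset.prod_const_one] at hone
              calc γ.re + (n:ℝ) = (γ.re + (n:ℝ) + ((0:ℕ):ℝ)) * 1 := by norm_num
              _ ≤ (γ.re + (n:ℝ) + ((0:ℕ):ℝ)) *
                    ∏ i ∈ Finset.range v, (γ.re + (n:ℝ) + ((i + 1 : ℕ):ℝ)) := by
                  apply mul_le_mul_of_nonneg_left hone
                  push_cast
                  linarith
              _ = _ := by rw [mul_comm]
            have hfac : (1:ℝ) ≤ u.factorial := by exact_mod_cast Nat.one_le_iff_ne_zero.2 u.factorial_ne_zero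
            calc γ.re + (n:ℝ) ≤ ∏ i ∈ Finset.range u, ((γ + (n:ℂ)).re + i) := h3
            _ ≤ ‖poch (γ + n) u‖ := h2
            _ = ‖poch (γ + n) u‖ * 1 := by ring
            _ ≤ ‖poch (γ + n) u‖ * u.factorial := by
                apply mul_le_mul_of_nonneg_left hfac (norm_nonneg _)
          rw [T, norm_div, norm_mul (poch (γ+n) u)]
          rw [Complex.norm_natCast]
          apply div_le_div₀ hK0 hnum (by linarith)
          exact hden
        · have h1' : Tendsto (fun n : ℕ => γ.re + (n:ℝ)) atTop atTop :=
            tendsto_atTop_add_const_left _ _ tendsto_natCast_atTop_atTop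
          simpa [div_eq_mul_inv] using h1'.inv_tendsto_atTop.const_mul K
    · -- domination
      obtain ⟨n₀, hn₀⟩ := exists_nat_ge (M - γ.re)
      refine eventually_atTop.2 ⟨n₀, fun n hn => ?_⟩
      intro u
      have hMn : M ≤ γ.re + n := by
        have : (n₀:ℝ) ≤ n := by exact_mod_cast hn
        linarith
      have hz : (0:ℝ) ≤ (γ + (n:ℂ)).re := by
        rw [Complex.add_re γ, Complex.natCast_re]; linarith
      have hre2 : (γ + (n:ℂ)).re = γ.re + n := by
        rw [Complex.add_re γ, Complex.natCast_re]
      have hdenle : ∏ i ∈ Finset.range u, (M + i) ≤ ‖poch (γ + n) u‖ := by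
        calc ∏ i ∈ Finset.range u, (M + i)
            ≤ ∏ i ∈ Finset.range u, ((γ + (n:ℂ)).re + i) := by
              apply Finset.prod_le_prod (fun i _ => by positivity)
              intro i _
              rw [hre2]
              linarith
        _ ≤ ‖poch (γ + n) u‖ := le_norm_poch hz u
      have hnum : ‖poch α u * poch β u‖
          ≤ (∏ i ∈ Finset.range u, (‖α‖ + i)) * (∏ i ∈ Finset.range u, (‖β‖ + i)) := by
        rw [norm_mul]
        exact mul_le_mul (norm_poch_le α u) (norm_poch_le β u) (norm_nonneg _)
          (Finset.prod_nonneg fun i _ => by positivity)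
      have hdpos : (0:ℝ) < (∏ i ∈ Finset.range u, (M + i)) * u.factorial := by
        apply mul_pos
        · exact Finset.prod_pos fun i _ => by positivity
        · exact_mod_cast Nat.factorial_pos u
      rw [T, norm_div, norm_mul (poch (γ+n) u), Complex.norm_natCast, hgdef]
      apply div_le_div₀ (le_trans (norm_nonneg _) hnum) hnum hdpos
      apply mul_le_mul_of_nonneg_right hdenle (by positivity)
  rw [hsa] at main
  exact main

lemma P_tendsto (α β γ : ℂ) (h1 : (α + β).re < γ.re) (hγ : ∀ n : ℕ, γ ≠ -n) :
    Tendsto (P α β γ) atTop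
      (𝓝 (Complex.Gamma γ * Complex.Gamma (γ - α - β)
        / (Complex.Gamma (γ - α) * Complex.Gamma (γ - β)))) := by
  have hρ : 0 < (γ - α - β).re := by
    simp only [Complex.sub_re]
    have : (α + β).re = α.re + β.re := Complex.add_re α β
    linarith
  by_cases hcase : (∃ m : ℕ, γ - α = -(m:ℂ)) ∨ (∃ m : ℕ, γ - β = -(m:ℂ))
  · -- degenerate case : limit is 0 and P is eventually 0
    have hG0 : Complex.Gamma (γ - α) * Complex.Gamma (γ - β) = 0 := by
      rcases hcase with ⟨m, hm⟩ | ⟨m, hm⟩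
      · rw [hm, Complex.Gamma_neg_nat_eq_zero, zero_mul]
      · rw [hm, Complex.Gamma_neg_nat_eq_zero, mul_zero]
    rw [hG0, div_zero]
    have : ∀ᶠ n in atTop, P α β γ n = 0 := by
      rcases hcase with ⟨m, hm⟩ | ⟨m, hm⟩
      · refine eventually_atTop.2 ⟨m + 1, fun n hn => ?_⟩
        have : poch (γ - α) n = 0 := by
          rw [poch_eq_prod]
          apply Finset.prod_eq_zero (Finset.mem_range.2 (lt_of_lt_of_le (Nat.lt_succ_self m) hn))
          rw [hm]
          ring
        simp [P, this]
      · refine eventually_atTop.2 ⟨m + 1, fun n hn => ?_⟩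
        have : poch (γ - β) n = 0 := by
          rw [poch_eq_prod]
          apply Finset.prod_eq_zero (Finset.mem_range.2 (lt_of_lt_of_le (Nat.lt_succ_self m) hn))
          rw [hm]
          ring
        simp [P, this]
    exact Tendsto.congr' (this.mono fun n h => h.symm) tendsto_const_nhds
  · push_neg at hcase
    obtain ⟨hα, hβ⟩ := hcase
    have hΓα : Complex.Gamma (γ - α) ≠ 0 := Complex.Gamma_ne_zero hα
    have hΓβ : Complex.Gamma (γ - β) ≠ 0 := Complex.Gamma_ne_zero hβ
    have hQ : Tendsto (fun n => Complex.GammaSeq γ n * Complex.GammaSeq (γ - α - β) n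
        / (Complex.GammaSeq (γ - α) n * Complex.GammaSeq (γ - β) n)) atTop
        (𝓝 (Complex.Gamma γ * Complex.Gamma (γ - α - β)
          / (Complex.Gamma (γ - α) * Complex.Gamma (γ - β)))) :=
      ((Complex.GammaSeq_tendsto_Gamma γ).mul
        (Complex.GammaSeq_tendsto_Gamma (γ - α - β))).div
        ((Complex.GammaSeq_tendsto_Gamma (γ - α)).mul
          (Complex.GammaSeq_tendsto_Gamma (γ - β))) (mul_ne_zero hΓα hΓβ)
    rw [← tendsto_add_atTop_iff_nat 1]
    apply Tendsto.congr' _ hQ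
    refine (eventually_atTop.2 ⟨1, fun n hn => ?_⟩)
    -- show GammaSeq quotient = P (n+1)
    have hn0 : (n:ℂ) ≠ 0 := Nat.cast_ne_zero.2 (by omega)
    have hgs : ∀ z : ℂ, Complex.GammaSeq z n = (n:ℂ) ^ z * n.factorial / poch z (n + 1) := by
      intro z
      rw [Complex.GammaSeq, poch_eq_prod]
    have hpow : (n:ℂ) ^ γ * (n:ℂ) ^ (γ - α - β) = (n:ℂ) ^ (γ - α) * (n:ℂ) ^ (γ - β) := by
      rw [← Complex.cpow_add _ _ hn0, ← Complex.cpow_add _ _ hn0]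
      congr 1
      ring
    have hcp : ∀ z : ℂ, (n:ℂ) ^ z ≠ 0 := fun z => by
      simp [Complex.cpow_eq_zero_iff, hn0]
    have hf : (n.factorial : ℂ) ≠ 0 := Nat.cast_ne_zero.2 n.factorial_ne_zero
    have hpγ : poch γ (n+1) ≠ 0 := poch_ne_zero hγ (n+1)
    have hpρ : poch (γ - α - β) (n+1) ≠ 0 := poch_ne_zero_of_re_pos hρ (n+1)
    have hpα : poch (γ - α) (n+1) ≠ 0 := poch_ne_zero hα (n+1)
    have hpβ : poch (γ - β) (n+1) ≠ 0 := poch_ne_zero hβ (n+1)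
    show Complex.GammaSeq γ n * Complex.GammaSeq (γ - α - β) n
        / (Complex.GammaSeq (γ - α) n * Complex.GammaSeq (γ - β) n) = P α β γ (n + 1)
    rw [hgs, hgs, hgs, hgs, P]
    have key : ∀ a1 a2 a3 a4 b1 b2 b3 b4 : ℂ, b1 ≠ 0 → b2 ≠ 0 → a3 ≠ 0 → a4 ≠ 0 →
        b3 ≠ 0 → b4 ≠ 0 → a1 * a2 = a3 * a4 →
        a1 / b1 * (a2 / b2) / (a3 / b3 * (a4 / b4)) = b3 * b4 / (b1 * b2) := by
      intro a1 a2 a3 a4 b1 b2 b3 b4 hb1 hb2 ha3 ha4 hb3 hb4 h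
      rw [div_mul_div_comm, div_mul_div_comm, h]
      have hX : a3 * a4 ≠ 0 := mul_ne_zero ha3 ha4
      field_simp

    exact key _ _ _ _ _ _ _ _ hpγ hpρ (mul_ne_zero (hcp _) hf) (mul_ne_zero (hcp _) hf)
      hpα hpβ (by linear_combination ((n.factorial : ℂ) * (n.factorial : ℂ)) * hpow)

end Gauss2F1

open Gauss2F1 Filter Topology in
/-- Gauss's hypergeometric theorem: for `Re(γ) > Re(α+β)` and `−γ ∉ ℕ₀`,
`₂F₁(α,β;γ;1) = Σ_{u≥0} (α)_u(β)_u/((γ)_u u!) = Γ(γ)Γ(γ−α−β)/(Γ(γ−α)Γ(γ−β))`. -/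
theorem stmt8 (α β γ : ℂ) (h1 : (α + β).re < γ.re) (h2 : ∀ n : ℕ, γ ≠ -(n : ℂ)) :
    ∑' u : ℕ,
        ((ascPochhammer ℂ u).eval α * (ascPochhammer ℂ u).eval β)
          / ((ascPochhammer ℂ u).eval γ * (u.factorial : ℂ))
      = Complex.Gamma γ * Complex.Gamma (γ - α - β)
          / (Complex.Gamma (γ - α) * Complex.Gamma (γ - β)) := by
  have hiter := iterate α β γ h1 h2
  have hlim : Tendsto (fun n : ℕ => P α β γ n * ∑' u, T α β (γ + n) u) atTop
      (𝓝 (Complex.Gamma γ * Complex.Gamma (γ - α - β)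
        / (Complex.Gamma (γ - α) * Complex.Gamma (γ - β)) * 1)) :=
    (P_tendsto α β γ h1 h2).mul (tail α β γ h1 h2)
  have hconst : Tendsto (fun _ : ℕ => ∑' u, T α β γ u) atTop (𝓝 (∑' u, T α β γ u)) :=
    tendsto_const_nhds
  have heq : (fun _ : ℕ => ∑' u, T α β γ u)
      = fun n : ℕ => P α β γ n * ∑' u, T α β (γ + n) u := funext fun n => hiter n
  rw [heq] at hconst
  have := tendsto_nhds_unique hconst hlim
  rw [mul_one] at this
  calc ∑' u : ℕ,
        ((ascPochhammer ℂ u).eval α * (ascPochhammer ℂ u).eval β)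
          / ((ascPochhammer ℂ u).eval γ * (u.factorial : ℂ))
      = ∑' u, T α β γ u := tsum_congr fun u => rfl
  _ = _ := this
end

section
/- Factorization lemma for chordal graphs: with the state of all separators fixed to i_𝒮, the polynomial identity Σ_{i_V ⊃ i_𝒮} Π_{C∈𝒞} t(i_C) 1{i_C ⊂ i_V} = Π_{C∈𝒞} Σ_{i_C ≡ i_𝒮} t(i_C) holds in the indeterminates t(i_V), i_V ∈ I_V, where t(i_F) = Σ_{j ∈ I_{V∖F}} t(i_F, j) for F ⊂ V. -/
/-- Factorization lemma for chordal graphs: with the state of all separators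
fixed to `i_𝒮`, the polynomial identity
`∑_{i_V ⊃ i_𝒮} ∏_{C} t(i_C) 1{i_C ⊂ i_V} = ∏_{C} ∑_{i_C ≡ i_𝒮} t(i_C)`
holds in the indeterminates `t(i_V)`, where `t(i_F)` denotes the marginal sum of
the indeterminates over states extending the partial state `i_F`. -/
theorem stmt11 {V : Type*} [Fintype V] [DecidableEq V] (r : V → ℕ)
    (k : ℕ) (C : Fin k → Finset V) (Ssep : Finset V)
    -- the cliques cover the vertex set
    (hcov : ∀ v : V, ∃ i : Fin k, v ∈ C i)
    -- all pairwise intersections of cliques are contained in the separators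
    (hsep : ∀ i j : Fin k, i ≠ j → C i ∩ C j ⊆ Ssep)
    -- the fixed state of the separators
    (s : ∀ w : Ssep, Fin (r w)) :
    (∑ x ∈ Finset.univ.filter
        (fun x : ∀ v : V, Fin (r v) => ∀ w : Ssep, x w = s w),
      ∏ i : Fin k,
        ∑ y ∈ Finset.univ.filter
            (fun y : ∀ v : V, Fin (r v) => ∀ w : (C i : Finset V), y w = x w),
          (MvPolynomial.X y : MvPolynomial (∀ v : V, Fin (r v)) ℚ))
    = ∏ i : Fin k,
        ∑ y ∈ Finset.univ.filter
            (fun y : ∀ v : V, Fin (r v) =>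
              ∀ w : Ssep, (w : V) ∈ C i → y w = s w),
          (MvPolynomial.X y : MvPolynomial (∀ v : V, Fin (r v)) ℚ) := by
  classical
  simp only [Finset.prod_univ_sum]
  rw [Finset.sum_sigma']
  refine Finset.sum_nbij' (fun p => p.2)
    (fun g => ⟨fun v => g (hcov v).choose v, g⟩) ?_ ?_ ?_ ?_ ?_
  · rintro ⟨x, g⟩ hp
    rw [Finset.mem_sigma] at hp
    obtain ⟨hx, hg⟩ := hp
    simp only [Finset.mem_filter, Finset.mem_univ, true_and] at hx
    rw [Fintype.mem_piFinset] at hg ⊢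
    intro i
    have hgi := hg i
    simp only [Finset.mem_filter, Finset.mem_univ, true_and] at hgi ⊢
    intro w hw
    rw [hgi ⟨w, hw⟩, hx w]
  · intro g hg
    rw [Fintype.mem_piFinset] at hg
    simp only [Finset.mem_filter, Finset.mem_univ, true_and] at hg
    rw [Finset.mem_sigma]
    constructor
    · simp only [Finset.mem_filter, Finset.mem_univ, true_and]
      intro w
      exact hg (hcov (w : V)).choose w (hcov (w : V)).choose_spec
    · rw [Fintype.mem_piFinset]
      intro i
      simp only [Finset.mem_filter, Finset.mem_univ, true_and]
      rintro ⟨v, hv⟩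
      by_cases hij : i = (hcov v).choose
      · exact congrFun (congrArg g hij) v
      · have hvS : v ∈ Ssep := hsep i (hcov v).choose hij
          (Finset.mem_inter.mpr ⟨hv, (hcov v).choose_spec⟩)
        rw [hg i ⟨v, hvS⟩ hv, hg (hcov v).choose ⟨v, hvS⟩ (hcov v).choose_spec]
  · rintro ⟨x, g⟩ hp
    rw [Finset.mem_sigma] at hp
    obtain ⟨_, hg⟩ := hp
    rw [Fintype.mem_piFinset] at hg
    have hx : (fun v => g (hcov v).choose v) = x := by
      funext v
      have := hg (hcov v).choose
      simp only [Finset.mem_filter, Finset.mem_univ, true_and] at this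
      exact this ⟨v, (hcov v).choose_spec⟩
    exact Sigma.ext hx HEq.rfl
  · intro g _
    rfl
  · rintro ⟨x, g⟩ _
    rfl
end

section
/- If m ≥ b₁ − b₂ + 1, the A-hypergeometric polynomial of the univariate Poisson regression configuration A = ((1,2,...,m),(1,...,1)) at y = 1 and b = (b₁,b₂)ᵀ equals (b₁−1)! / ((b₂−1)!(b₁−b₂)! b₂!), i.e. the signless Lah number divided by b₁!. -/
open Polynomial Finset

lemma geom_coeff (m i : ℕ) (hi : i < m) :
    ((∑ j ∈ Finset.range m, (Polynomial.X : Polynomial ℚ) ^ j)).coeff i = 1 := by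
  rw [Polynomial.finset_sum_coeff]
  simp only [Polynomial.coeff_X_pow]
  simp [Finset.sum_ite_eq (Finset.range m) i (fun _ => (1:ℚ)), hi]

lemma geom_pow_coeff (m k : ℕ) : ∀ n : ℕ, n < m →
    (((∑ j ∈ Finset.range m, (Polynomial.X : Polynomial ℚ) ^ j)) ^ (k+1)).coeff n
      = (n + k).choose n := by
  induction k with
  | zero => intro n hn; simpa using geom_coeff m n hn
  | succ k ih =>
    intro n hn
    rw [pow_succ, mul_comm, Polynomial.coeff_mul,
      Finset.Nat.sum_antidiagonal_eq_sum_range_succ_mk]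
    have : ∀ i ∈ Finset.range (n+1),
        (∑ j ∈ Finset.range m, (Polynomial.X : Polynomial ℚ) ^ j).coeff i
          * (((∑ j ∈ Finset.range m, (Polynomial.X : Polynomial ℚ) ^ j)) ^ (k+1)).coeff (n - i)
        = (((n - i) + k).choose (n - i) : ℚ) := by
      intro i hi
      rw [Finset.mem_range] at hi
      rw [geom_coeff m i (by omega), ih (n - i) (by omega), one_mul]
    rw [Finset.sum_congr rfl this]
    have hrefl := Finset.sum_range_reflect (fun j => (((j + k).choose j : ℚ))) (n+1)
    simp only [Nat.add_sub_cancel] at hrefl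
    rw [hrefl]
    have h2 : ∀ j ∈ Finset.range (n+1), ((j + k).choose j : ℚ)
        = ((j + k).choose k : ℚ) := by
      intro j hj
      rw [Finset.mem_range] at hj
      rw [Nat.choose_symm_add]
    rw [Finset.sum_congr rfl h2, ← Nat.cast_sum, Nat.sum_range_add_choose]
    norm_cast
    exact (Nat.choose_symm_of_eq_add (by omega)).symm

/-- If `m ≥ b₁ − b₂ + 1`, the `A`-hypergeometric polynomial of the univariate
Poisson regression configuration `A = ((1,2,…,m),(1,…,1))` at `y = 1` and
`b = (b₁,b₂)ᵀ` equals `(b₁−1)!/((b₂−1)!(b₁−b₂)! b₂!)`, i.e. the signless Lah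
number divided by `b₁!`. -/
theorem stmt16 (m b1 b2 : ℕ) (hb2 : 1 ≤ b2) (hb : b2 ≤ b1)
    (hm : b1 - b2 + 1 ≤ m) :
    (∑ᶠ u ∈ {u : Fin m → ℕ |
        ∑ j : Fin m, ((j : ℕ) + 1) * u j = b1 ∧ ∑ j : Fin m, u j = b2},
      ∏ j, (1 : ℚ) / (Nat.factorial (u j) : ℚ))
    = ((b1 - 1).factorial : ℚ)
        / (((b2 - 1).factorial : ℚ) * ((b1 - b2).factorial : ℚ)
          * (b2.factorial : ℚ)) := by
  classical
  set S : Finset (Fin m → ℕ) :=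
    (Finset.piAntidiag Finset.univ b2).filter
      (fun u => ∑ j : Fin m, ((j : ℕ) + 1) * u j = b1) with hS
  have hset : {u : Fin m → ℕ |
      ∑ j : Fin m, ((j : ℕ) + 1) * u j = b1 ∧ ∑ j : Fin m, u j = b2} = ↑S := by
    ext u
    simp [hS, Finset.mem_piAntidiag, and_comm]
  rw [hset, finsum_mem_coe_finset]
  -- rewrite each summand via multinomial
  have hsummand : ∀ u ∈ S, (∏ j, (1 : ℚ) / (Nat.factorial (u j) : ℚ))
      = (Nat.multinomial Finset.univ u : ℚ) / (b2.factorial : ℚ) := by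
    intro u hu
    have hsum : ∑ j : Fin m, u j = b2 := by
      have := (Finset.mem_piAntidiag.mp (Finset.mem_filter.mp hu).1).1
      simpa using this
    have hspec := Nat.multinomial_spec Finset.univ u
    rw [hsum] at hspec
    have : ((∏ j, (u j).factorial : ℕ) : ℚ) * (Nat.multinomial Finset.univ u : ℚ)
        = (b2.factorial : ℚ) := by exact_mod_cast congrArg (Nat.cast (R := ℚ)) hspec
    push_cast at this
    rw [eq_div_iff (by positivity : (b2.factorial : ℚ) ≠ 0)]
    field_simp
    rw [mul_comm]
    rw [← this]
    simp only [one_div, Finset.prod_inv_distrib]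
    field_simp
  rw [Finset.sum_congr rfl hsummand, ← Finset.sum_div]
  -- compute the multinomial sum as a polynomial coefficient
  have hcoeff : ∑ u ∈ S, (Nat.multinomial Finset.univ u : ℚ)
      = ((∑ j : Fin m, (Polynomial.X : Polynomial ℚ) ^ ((j : ℕ) + 1)) ^ b2).coeff b1 := by
    rw [Finset.sum_pow_eq_sum_piAntidiag, Polynomial.finset_sum_coeff]
    have : ∀ u ∈ Finset.piAntidiag (Finset.univ : Finset (Fin m)) b2,
        ((Nat.multinomial Finset.univ u : Polynomial ℚ)
          * ∏ j : Fin m, ((Polynomial.X : Polynomial ℚ) ^ ((j : ℕ) + 1)) ^ u j).coeff b1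
        = if (∑ j : Fin m, ((j : ℕ) + 1) * u j) = b1
            then (Nat.multinomial Finset.univ u : ℚ) else 0 := by
      intro u hu
      have hp : ∏ j : Fin m, ((Polynomial.X : Polynomial ℚ) ^ ((j : ℕ) + 1)) ^ u j
          = (Polynomial.X : Polynomial ℚ) ^ (∑ j : Fin m, ((j : ℕ) + 1) * u j) := by
        simp_rw [← pow_mul]
        rw [Finset.prod_pow_eq_pow_sum]
      rw [hp, show ((Nat.multinomial Finset.univ u : ℕ) : Polynomial ℚ)
          = Polynomial.C ((Nat.multinomial Finset.univ u : ℕ) : ℚ) by simp,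
        Polynomial.coeff_C_mul, Polynomial.coeff_X_pow]
      simp [eq_comm]
    rw [Finset.sum_congr rfl this, ← Finset.sum_filter, ← hS]
  rw [hcoeff]
  have h1 : ∑ j : Fin m, (Polynomial.X : Polynomial ℚ) ^ ((j : ℕ) + 1)
      = Polynomial.X * ∑ j ∈ Finset.range m, (Polynomial.X : Polynomial ℚ) ^ j := by
    rw [Finset.mul_sum, Fin.sum_univ_eq_sum_range (fun j => (Polynomial.X : Polynomial ℚ) ^ (j + 1))]
    refine Finset.sum_congr rfl fun j _ => ?_
    rw [pow_succ, mul_comm]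
  obtain ⟨c, rfl⟩ : ∃ c, b2 = c + 1 := ⟨b2 - 1, by omega⟩
  have h2 : ((Polynomial.X * ∑ j ∈ Finset.range m, (Polynomial.X : Polynomial ℚ) ^ j)
      ^ (c + 1)).coeff b1
      = ((∑ j ∈ Finset.range m, (Polynomial.X : Polynomial ℚ) ^ j) ^ (c + 1)).coeff
        (b1 - (c + 1)) := by
    rw [mul_pow]
    conv_lhs => rw [show b1 = (b1 - (c + 1)) + (c + 1) by omega]
    rw [Polynomial.coeff_X_pow_mul]
  rw [h1, h2, geom_pow_coeff m c (b1 - (c + 1)) (by omega),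
    show b1 - (c + 1) + c = b1 - 1 by omega,
    Nat.cast_choose ℚ (show b1 - (c + 1) ≤ b1 - 1 by omega),
    show b1 - 1 - (b1 - (c + 1)) = c by omega, Nat.add_sub_cancel, div_div]
  ring_nf
end

section
/- For the binary non-l-way interaction model, the kernel of the configuration matrix A^{(2^l)} over Z is one-dimensional, generated by the vector z with z_i = +1 when the number of 1's in the binary index i ∈ [2]^l is even and z_i = −1 when it is odd; consequently the unique minimal Markov basis up to sign consists of this single move. -/
open Finset in
lemma card_upd (l : ℕ) (x : Fin l → Fin 2) (t : Fin l) :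
    (univ.filter (fun s => Function.update x t (0:Fin 2) s = 0)).card
      = (univ.filter (fun s => Function.update x t (1:Fin 2) s = 0)).card + 1 := by
  have h1 : (univ.filter (fun s => Function.update x t (1:Fin 2) s = 0))
      = (univ.erase t).filter (fun s => x s = 0) := by
    ext s
    by_cases h : s = t <;> simp [Function.update_apply, h]
  have h0 : (univ.filter (fun s => Function.update x t (0:Fin 2) s = 0))
      = insert t ((univ.erase t).filter (fun s => x s = 0)) := by
    ext s
    by_cases h : s = t <;> simp [Function.update_apply, h]
  rw [h0, h1, Finset.card_insert_of_notMem (by simp)]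

open Finset in
/-- For the binary non-`l`-way interaction model, the kernel over `ℤ` of the
configuration matrix (sending a `2×⋯×2` table to all of its `(l−1)`-dimensional
marginals) is one-dimensional, generated by the vector `z` with `z_i = +1` when
the number of `1`'s in the binary index `i` is even and `z_i = −1` when it is
odd; this single move is the unique minimal Markov basis up to sign.
(The coordinate value `0 : Fin 2` encodes the state `1`.) -/
theorem stmt17 (l : ℕ) (hl : 2 ≤ l) (u : (Fin l → Fin 2) → ℤ) :
    (∀ t : Fin l, ∀ x : Fin l → Fin 2,
        ∑ v : Fin 2, u (Function.update x t v) = 0)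
    ↔ ∃ k : ℤ, ∀ i : Fin l → Fin 2,
        u i = k * (-1) ^ (univ.filter (fun t : Fin l => i t = 0)).card := by
  constructor
  · intro h
    refine ⟨u (fun _ => 1), ?_⟩
    have key : ∀ n : ℕ, ∀ i : Fin l → Fin 2,
        (univ.filter (fun t : Fin l => i t = 0)).card = n →
        u i = u (fun _ => 1) * (-1) ^ n := by
      intro n
      induction n with
      | zero =>
        intro i hi
        have : i = fun _ => 1 := by
          funext t
          have ht : i t ≠ 0 := by
            intro h0
            have : t ∈ univ.filter (fun t : Fin l => i t = 0) := by simp [h0]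
            rw [Finset.card_eq_zero] at hi
            simp [hi] at this
          omega
        rw [this]; ring
      | succ n ih =>
        intro i hi
        have hne : (univ.filter (fun t : Fin l => i t = 0)).Nonempty := by
          rw [← Finset.card_pos, hi]; omega
        obtain ⟨t, ht⟩ := hne
        simp only [Finset.mem_filter] at ht
        have hupd0 : Function.update i t (0:Fin 2) = i := by
          rw [← ht.2]; exact Function.update_eq_self t i
        have hc := card_upd l i t
        rw [hupd0, hi] at hc
        have hc1 : (univ.filter (fun s => Function.update i t (1:Fin 2) s = 0)).card = n := by
          omega
        have hsum := h t i
        rw [Fin.sum_univ_two, hupd0] at hsum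
        have := ih (Function.update i t (1:Fin 2)) hc1
        rw [this] at hsum
        have : u i = -(u (fun _ => 1) * (-1) ^ n) := by linarith
        rw [this]; ring
    intro i
    exact key _ i rfl
  · rintro ⟨k, hk⟩ t x
    rw [Fin.sum_univ_two, hk, hk]
    have hc := card_upd l x t
    rw [hc]; ring
end
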